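/- arXiv:2012.09513 — 3 statements merged into one kernel-verified Lean document; each statement's English description precedes it below -/
import Mathlib

section
/- Let X, Y, Z be independent random vectors in ℝ^d. Define ζ := sup_{r∈ℝ^d} |P(X ≤ r) − P(Y ≤ r)|, γ := sup_{r∈ℝ^d} |P(X+Z ≤ r) − P(Y+Z ≤ r)|, and for ε > 0 let α := P(‖Z‖_∞ ≤ ε) and τ := sup_{r∈ℝ^d} |P(Y ≤ r + 2ε·1) − P(Y ≤ r)|, where 1 is the all-ones vector. If α > 1/2, then ζ ≤ (γ + ατ)/(2α − 1). -/
/-!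
On the event `‖Z‖_∞ ≤ ε`, of probability `α`, adding `Z` moves every coordinate by at most `ε`,
so `P(X + Z ≤ r + ε) ≥ α P(X ≤ r)` and `P(Y + Z ≤ r + ε, ‖Z‖_∞ ≤ ε) ≤ α P(Y ≤ r + 2ε)`, and the
latter exceeds `α P(Y ≤ r)` by at most `ατ`. Off that event, conditioning on `Z` (independence)
bounds the difference of the two probabilities by `(1 - α) ζ`. Hence
`α |P(X ≤ r) - P(Y ≤ r)| ≤ γ + ατ + (1 - α) ζ` for every `r`, and taking the supremum over `r`
gives `(2α - 1) ζ ≤ γ + ατ`.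
-/

open MeasureTheory ProbabilityTheory Set

lemma bddAbove_range_abs_measureReal_sub {ι α : Type*} [MeasurableSpace α] (μ ν : Measure α)
    [IsProbabilityMeasure μ] [IsProbabilityMeasure ν] (s t : ι → Set α) :
    BddAbove (range fun i => |μ.real (s i) - ν.real (t i)|) :=
  ⟨1, by
    rintro _ ⟨i, rfl⟩
    exact abs_sub_le_of_nonneg_of_le measureReal_nonneg measureReal_le_one measureReal_nonneg
      measureReal_le_one⟩

/-- No boundedness is needed: in `ℝ` an unbounded family has supremum `0`. -/
lemma iSup_abs_le_div_of_forall {ι : Type*} [Nonempty ι] {D : ι → ℝ} {α c : ℝ} (hα : 1 / 2 < α)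
    (h : ∀ i, α * |D i| ≤ c + (1 - α) * ⨆ i, |D i|) :
    (⨆ i, |D i|) ≤ c / (2 * α - 1) := by
  have hsup : α * (⨆ i, |D i|) ≤ c + (1 - α) * ⨆ i, |D i| := by
    rw [Real.mul_iSup_of_nonneg (by linarith)]
    exact ciSup_le h
  rw [le_div_iff₀ (by linarith)]
  linarith

section OrderedGroup

variable {E : Type*} [AddCommGroup E] [PartialOrder E] [IsOrderedAddMonoid E]

lemma preimage_prodMk_add_preimage_Iic (t z : E) :
    (fun x => (x, z)) ⁻¹' ((fun p : E × E => p.1 + p.2) ⁻¹' Iic t) = Iic (t - z) := by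
  ext x
  simp [le_sub_iff_add_le]

variable [TopologicalSpace E] [OrderClosedTopology E]
  [MeasurableSpace E] [OpensMeasurableSpace E] [MeasurableAdd₂ E]

lemma measurable_measure_Iic_sub (P : Measure E) [SFinite P] (t : E) :
    Measurable fun z => P (Iic (t - z)) := by
  simp_rw [← preimage_prodMk_add_preimage_Iic]
  exact measurable_measure_prodMk_right (measurable_add measurableSet_Iic)

lemma integrable_measureReal_Iic_sub (P ν : Measure E) [IsFiniteMeasure P] [IsFiniteMeasure ν]
    (t : E) : Integrable (fun z => P.real (Iic (t - z))) ν :=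
  .of_bound (measurable_measure_Iic_sub P t).ennreal_toReal.aestronglyMeasurable (P.real univ)
    (.of_forall fun _ => by
      rw [Real.norm_of_nonneg measureReal_nonneg]
      exact measureReal_mono (subset_univ _))

lemma measureReal_conv_Iic (P ν : Measure E) [IsFiniteMeasure P] [SFinite ν] (t : E) :
    (P ∗ ν).real (Iic t) = ∫ z, P.real (Iic (t - z)) ∂ν := by
  rw [measureReal_def, Measure.conv, Measure.map_apply measurable_add measurableSet_Iic,
    Measure.prod_apply_symm (measurable_add measurableSet_Iic)]
  simp_rw [preimage_prodMk_add_preimage_Iic, measureReal_def]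
  exact (integral_toReal (measurable_measure_Iic_sub P t).aemeasurable
    (.of_forall fun _ => measure_lt_top _ _)).symm

lemma measureReal_Iic_sub_le_conv (P Q ν : Measure E) [IsProbabilityMeasure P]
    [IsProbabilityMeasure Q] [IsProbabilityMeasure ν] {ζ : ℝ}
    (hζ : ∀ s, |P.real (Iic s) - Q.real (Iic s)| ≤ ζ) (r δ : E) :
    ν.real (Icc (-δ) δ) * (P.real (Iic r) - Q.real (Iic (r + 2 • δ)))
        - (1 - ν.real (Icc (-δ) δ)) * ζ
      ≤ (P ∗ ν).real (Iic (r + δ)) - (Q ∗ ν).real (Iic (r + δ)) := by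
  set A := Icc (-δ) δ
  have hA : MeasurableSet A := measurableSet_Icc
  have hPi := integrable_measureReal_Iic_sub P ν (r + δ)
  have hQi := integrable_measureReal_Iic_sub Q ν (r + δ)
  have hP : ν.real A * P.real (Iic r) ≤ ∫ z in A, P.real (Iic (r + δ - z)) ∂ν := by
    rw [← smul_eq_mul, ← setIntegral_const]
    refine setIntegral_mono_on integrableOn_const hPi.integrableOn hA fun z hz => ?_
    refine measureReal_mono (Iic_subset_Iic.2 ?_)
    rw [add_sub_assoc]
    exact le_add_of_nonneg_right (sub_nonneg.2 hz.2)
  have hQ : ∫ z in A, Q.real (Iic (r + δ - z)) ∂ν ≤ ν.real A * Q.real (Iic (r + 2 • δ)) := by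
    rw [← smul_eq_mul, ← setIntegral_const]
    refine setIntegral_mono_on hQi.integrableOn integrableOn_const hA fun z hz => ?_
    refine measureReal_mono (Iic_subset_Iic.2 ?_)
    rw [two_nsmul, ← add_assoc, sub_eq_add_neg]
    gcongr
    exact neg_le.1 hz.1
  have hAc : |∫ z in Aᶜ, P.real (Iic (r + δ - z)) ∂ν - ∫ z in Aᶜ, Q.real (Iic (r + δ - z)) ∂ν|
      ≤ (1 - ν.real A) * ζ := by
    rw [← integral_sub hPi.integrableOn hQi.integrableOn, ← probReal_compl_eq_one_sub hA,
      mul_comm]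
    exact norm_setIntegral_le_of_norm_le_const (measure_lt_top _ _) fun z _ =>
      (Real.norm_eq_abs _).trans_le (hζ _)
  rw [measureReal_conv_Iic, measureReal_conv_Iic, ← integral_add_compl hA hPi,
    ← integral_add_compl hA hQi]
  linarith [(abs_le.1 hAc).1]

theorem iSup_abs_measureReal_Iic_sub_le (P Q ν : Measure E) [IsProbabilityMeasure P]
    [IsProbabilityMeasure Q] [IsProbabilityMeasure ν] (δ : E)
    (hα : 1 / 2 < ν.real (Icc (-δ) δ)) :
    (⨆ r, |P.real (Iic r) - Q.real (Iic r)|)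
      ≤ ((⨆ r, |(P ∗ ν).real (Iic r) - (Q ∗ ν).real (Iic r)|)
          + ν.real (Icc (-δ) δ) * ⨆ r, |Q.real (Iic (r + 2 • δ)) - Q.real (Iic r)|)
        / (2 * ν.real (Icc (-δ) δ) - 1) := by
  set α := ν.real (Icc (-δ) δ)
  set ζ := ⨆ r, |P.real (Iic r) - Q.real (Iic r)|
  set γ := ⨆ r, |(P ∗ ν).real (Iic r) - (Q ∗ ν).real (Iic r)|
  set τ := ⨆ r, |Q.real (Iic (r + 2 • δ)) - Q.real (Iic r)|
  have hζ (s : E) : |P.real (Iic s) - Q.real (Iic s)| ≤ ζ :=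
    le_ciSup (bddAbove_range_abs_measureReal_sub P Q _ _) s
  have hγ (s : E) : |(P ∗ ν).real (Iic s) - (Q ∗ ν).real (Iic s)| ≤ γ :=
    le_ciSup (bddAbove_range_abs_measureReal_sub (P ∗ ν) (Q ∗ ν) _ _) s
  have hτ (s : E) : |Q.real (Iic (s + 2 • δ)) - Q.real (Iic s)| ≤ τ :=
    le_ciSup (bddAbove_range_abs_measureReal_sub Q Q (fun r => Iic (r + 2 • δ)) _) s
  refine iSup_abs_le_div_of_forall hα fun r => ?_
  have hPQ := measureReal_Iic_sub_le_conv P Q ν hζ r δ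
  have hQP := measureReal_Iic_sub_le_conv Q P ν (fun s => abs_sub_comm (P.real _) _ ▸ hζ s)
    (r - 2 • δ) δ
  rw [sub_add_cancel] at hQP
  have hτr := hτ (r - 2 • δ)
  rw [sub_add_cancel] at hτr
  have hα0 : 0 ≤ α := measureReal_nonneg
  have h1 := mul_le_mul_of_nonneg_left (abs_le.1 (hτ r)).2 hα0
  have h2 := mul_le_mul_of_nonneg_left (abs_le.1 hτr).2 hα0
  rcases abs_cases (P.real (Iic r) - Q.real (Iic r)) with ⟨h, _⟩ | ⟨h, _⟩ <;> rw [h] <;>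
    linarith [(abs_le.1 (hγ (r + δ))).2, (abs_le.1 (hγ (r - 2 • δ + δ))).1]

end OrderedGroup

theorem stmt3_general {Ω : Type*} [MeasurableSpace Ω] (μ : Measure Ω) [IsProbabilityMeasure μ]
    {d : ℕ} (X Y Z : Ω → Fin d → ℝ)
    (hX : Measurable X) (hY : Measurable Y) (hZ : Measurable Z)
    (hindep : iIndepFun (m := fun _ : Fin 3 => (inferInstance : MeasurableSpace (Fin d → ℝ)))
      ![X, Y, Z] μ)
    (ε : ℝ)
    (hα : 1 / 2 < (μ {ω | ∀ j, |Z ω j| ≤ ε}).toReal) :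
    (⨆ r : Fin d → ℝ,
        |(μ {ω | ∀ j, X ω j ≤ r j}).toReal - (μ {ω | ∀ j, Y ω j ≤ r j}).toReal|)
      ≤ ((⨆ r : Fin d → ℝ,
            |(μ {ω | ∀ j, X ω j + Z ω j ≤ r j}).toReal
              - (μ {ω | ∀ j, Y ω j + Z ω j ≤ r j}).toReal|)
          + (μ {ω | ∀ j, |Z ω j| ≤ ε}).toReal *
            (⨆ r : Fin d → ℝ,
              |(μ {ω | ∀ j, Y ω j ≤ r j + 2 * ε}).toReal
                - (μ {ω | ∀ j, Y ω j ≤ r j}).toReal|))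
        / (2 * (μ {ω | ∀ j, |Z ω j| ≤ ε}).toReal - 1) := by
  set δ : Fin d → ℝ := fun _ => ε
  have hXZ : IndepFun X Z μ := by simpa using hindep.indepFun (show (0 : Fin 3) ≠ 2 by decide)
  have hYZ : IndepFun Y Z μ := by simpa using hindep.indepFun (show (1 : Fin 3) ≠ 2 by decide)
  have hball : {ω | ∀ j, |Z ω j| ≤ ε} = Z ⁻¹' Icc (-δ) δ := by
    ext ω
    simp [δ, Pi.le_def, abs_le, forall_and]
  have hshift (r : Fin d → ℝ) : {ω | ∀ j, Y ω j ≤ r j + 2 * ε} = Y ⁻¹' Iic (r + 2 • δ) := by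
    ext ω
    simp [δ, Pi.le_def]
  have := Measure.isProbabilityMeasure_map (μ := μ) hX.aemeasurable
  have := Measure.isProbabilityMeasure_map (μ := μ) hY.aemeasurable
  have := Measure.isProbabilityMeasure_map (μ := μ) hZ.aemeasurable
  have key := iSup_abs_measureReal_Iic_sub_le (μ.map X) (μ.map Y) (μ.map Z) δ
    (by rwa [map_measureReal_apply hZ measurableSet_Icc, ← hball, measureReal_def])
  rw [← hXZ.map_add_eq_map_conv_map hX hZ, ← hYZ.map_add_eq_map_conv_map hY hZ] at key
  simp only [map_measureReal_apply hX measurableSet_Iic,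
    map_measureReal_apply hY measurableSet_Iic, map_measureReal_apply (hX.add hZ) measurableSet_Iic,
    map_measureReal_apply (hY.add hZ) measurableSet_Iic,
    map_measureReal_apply hZ measurableSet_Icc] at key
  simp only [hball, hshift, ← measureReal_def]
  exact key

/-- Smoothing inequality.  For independent random vectors X, Y, Z in ℝ^d,
with ζ, γ, τ the Kolmogorov-type distances defined below and
α := P(‖Z‖_∞ ≤ ε) > 1/2, one has ζ ≤ (γ + ατ)/(2α − 1). -/
theorem stmt3 {Ω : Type*} [MeasurableSpace Ω] (μ : Measure Ω) [IsProbabilityMeasure μ]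
    {d : ℕ} (X Y Z : Ω → Fin d → ℝ)
    (hX : Measurable X) (hY : Measurable Y) (hZ : Measurable Z)
    (hindep : iIndepFun (m := fun _ : Fin 3 => (inferInstance : MeasurableSpace (Fin d → ℝ)))
      ![X, Y, Z] μ)
    (ε : ℝ) (hε : 0 < ε)
    (hα : 1 / 2 < (μ {ω | ∀ j, |Z ω j| ≤ ε}).toReal) :
    (⨆ r : Fin d → ℝ,
        |(μ {ω | ∀ j, X ω j ≤ r j}).toReal - (μ {ω | ∀ j, Y ω j ≤ r j}).toReal|)
      ≤ ((⨆ r : Fin d → ℝ,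
            |(μ {ω | ∀ j, X ω j + Z ω j ≤ r j}).toReal
              - (μ {ω | ∀ j, Y ω j + Z ω j ≤ r j}).toReal|)
          + (μ {ω | ∀ j, |Z ω j| ≤ ε}).toReal *
            (⨆ r : Fin d → ℝ,
              |(μ {ω | ∀ j, Y ω j ≤ r j + 2 * ε}).toReal
                - (μ {ω | ∀ j, Y ω j ≤ r j}).toReal|))
        / (2 * (μ {ω | ∀ j, |Z ω j| ≤ ε}).toReal - 1) :=
  stmt3_general μ X Y Z hX hY hZ hindep ε hα
end

section
/- Define Ψ : ℝ^d → ℝ by Ψ(w) := ∫_{−∞}^0 ∏_{j=1}^d Φ₁(t − w_j) dt, where Φ₁ is the standard normal cdf. Then for every j, ∂_j Ψ(w) = −∫_{ℝ_−^d} π_j(s) φ(s − w) ds, where ℝ_−^d = {s ∈ ℝ^d : s ≤ 0}, φ is the standard Gaussian density on ℝ^d, and π_j(s) := 1{j = argmax_{1≤k≤d} s_k} (with argmax taken as the smallest maximizing index). -/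
open MeasureTheory

/-- The standard normal density. -/
noncomputable def phi1 (t : ℝ) : ℝ := Real.exp (-t ^ 2 / 2) / Real.sqrt (2 * Real.pi)

/-- The standard normal cdf. -/
noncomputable def Phi1 (t : ℝ) : ℝ := ∫ u in Set.Iic t, phi1 u

/-- Ψ(w) := ∫_{−∞}^0 ∏_j Φ₁(t − w_j) dt. -/
noncomputable def Psi (d : ℕ) (w : Fin d → ℝ) : ℝ :=
  ∫ t in Set.Iic (0 : ℝ), ∏ j, Phi1 (t - w j)

/-- π_j(s) = 1 iff j is the smallest index at which s attains its maximum. -/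
noncomputable def piSel (d : ℕ) (j : Fin d) (s : Fin d → ℝ) : ℝ :=
  if (∀ k, s k ≤ s j) ∧ (∀ k, k < j → s k < s j) then 1 else 0

/-!
Differentiating under the integral sign, which is legitimate because `Φ₁ ≤ 1` and
`φ₁ u ≤ e^{1/2} e^u` dominate the `w`-derivative of the integrand by a multiple of `e^t` on
`t ≤ 0`, gives `∂_j Ψ(w) = -∫_{t ≤ 0} φ₁(t - w_j) ∏_{k ≠ j} Φ₁(t - w_k) dt`.
On the other side, write `s = (t, y)` with `t = s_j`. On `{t ≤ 0}` the constraint `s ≤ 0` is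
implied by `π_j(s) = 1`, which asks `y_k < t` for `k < j` and `y_k ≤ t` for `k > j`; by Fubini,
integrating out each `y_k` against `φ₁(y_k - w_k)` produces the factor `Φ₁(t - w_k)`.
-/

open Set ProbabilityTheory

lemma phi1_eq_gaussianPDFReal : phi1 = gaussianPDFReal 0 1 := by
  ext t
  simp [phi1, gaussianPDFReal, div_eq_inv_mul]

lemma phi1_nonneg (t : ℝ) : 0 ≤ phi1 t := by
  rw [phi1_eq_gaussianPDFReal]; exact gaussianPDFReal_nonneg _ _ _

@[fun_prop]
lemma continuous_phi1 : Continuous phi1 := by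
  unfold phi1; fun_prop

lemma integrable_phi1 : Integrable phi1 := by
  rw [phi1_eq_gaussianPDFReal]; exact integrable_gaussianPDFReal _ _

lemma integral_phi1 : ∫ t, phi1 t = 1 := by
  rw [phi1_eq_gaussianPDFReal]; exact integral_gaussianPDFReal_eq_one _ one_ne_zero

lemma phi1_le_exp (t : ℝ) : phi1 t ≤ Real.exp (1 / 2) * Real.exp t := by
  rw [← Real.exp_add]
  refine (div_le_self (Real.exp_pos _).le ?_).trans
    (Real.exp_le_exp.2 (by nlinarith [sq_nonneg (t + 1)]))
  exact Real.one_le_sqrt.2 (by nlinarith [Real.pi_gt_three])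

lemma Phi1_nonneg (t : ℝ) : 0 ≤ Phi1 t :=
  setIntegral_nonneg measurableSet_Iic fun u _ => phi1_nonneg u

lemma Phi1_le_one (t : ℝ) : Phi1 t ≤ 1 :=
  integral_phi1 ▸ setIntegral_le_integral integrable_phi1 (.of_forall phi1_nonneg)

lemma Phi1_le_exp (t : ℝ) : Phi1 t ≤ Real.exp (1 / 2) * Real.exp t := by
  calc Phi1 t ≤ ∫ u in Iic t, Real.exp (1 / 2) * Real.exp u :=
        setIntegral_mono_on integrable_phi1.integrableOn ((integrableOn_exp_Iic t).const_mul _)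
          measurableSet_Iic fun u _ => phi1_le_exp u
    _ = Real.exp (1 / 2) * Real.exp t := by rw [integral_const_mul, integral_exp_Iic]

lemma hasDerivAt_Phi1 (t : ℝ) : HasDerivAt Phi1 (phi1 t) t := by
  have h : Phi1 = fun u => Phi1 0 + ∫ v in (0 : ℝ)..u, phi1 v := by
    ext u
    rw [Phi1, Phi1, ← intervalIntegral.integral_Iic_sub_Iic integrable_phi1.integrableOn
      integrable_phi1.integrableOn]
    ring
  rw [h]
  exact (continuous_phi1.integral_hasStrictDerivAt 0 t).hasDerivAt.const_add _

@[fun_prop]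
lemma continuous_Phi1 : Continuous Phi1 :=
  continuous_iff_continuousAt.2 fun t => (hasDerivAt_Phi1 t).continuousAt

lemma setIntegral_Iic_phi1_sub (x c : ℝ) : ∫ u in Iic x, phi1 (u - c) = Phi1 (x - c) := by
  have h := (measurePreserving_sub_right volume c).setIntegral_preimage_emb
    (measurableEmbedding_subRight c) phi1 (Iic (x - c))
  rw [Phi1, ← h, preimage_sub_const_Iic, sub_add_cancel]

lemma setIntegral_Iio_phi1_sub (x c : ℝ) : ∫ u in Iio x, phi1 (u - c) = Phi1 (x - c) := by
  rw [setIntegral_congr_set Iio_ae_eq_Iic, setIntegral_Iic_phi1_sub]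

section Derivative

variable {ι : Type*} [Fintype ι]

open ContinuousLinearMap

lemma hasFDerivAt_Phi1_sub_apply (t : ℝ) (k : ι) (x : ι → ℝ) :
    HasFDerivAt (fun x : ι → ℝ => Phi1 (t - x k))
      (-(phi1 (t - x k) • (proj k : (ι → ℝ) →L[ℝ] ℝ))) x := by
  have h := (hasDerivAt_Phi1 (t - x k)).comp_hasFDerivAt x
    ((hasFDerivAt_const t x).fun_sub (hasFDerivAt_apply (𝕜 := ℝ) (F' := fun _ => ℝ) k x))
  rwa [zero_sub, smul_neg] at h

lemma phi1_sub_le_of_mem_ball {w x : ι → ℝ} (hx : x ∈ Metric.ball w 1) (t : ℝ) (k : ι) :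
    phi1 (t - x k) ≤ Real.exp t * Real.exp (3 / 2 - w k) := by
  have hk : |x k - w k| < 1 :=
    (dist_le_pi_dist x w k).trans_lt (Metric.mem_ball.1 hx)
  calc phi1 (t - x k) ≤ Real.exp (1 / 2) * Real.exp (t - x k) := phi1_le_exp _
    _ ≤ Real.exp t * Real.exp (3 / 2 - w k) := by
      rw [← Real.exp_add, ← Real.exp_add]
      exact Real.exp_le_exp.2 (by linarith [(abs_lt.1 hk).1])

variable [DecidableEq ι]

noncomputable def prodPhi1FDeriv (x : ι → ℝ) (t : ℝ) : (ι → ℝ) →L[ℝ] ℝ :=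
  ∑ k, (∏ l ∈ Finset.univ.erase k, Phi1 (t - x l)) • -(phi1 (t - x k) • proj k)

lemma hasFDerivAt_prod_Phi1 (t : ℝ) (x : ι → ℝ) :
    HasFDerivAt (fun x : ι → ℝ => ∏ k, Phi1 (t - x k)) (prodPhi1FDeriv x t) x :=
  HasFDerivAt.finsetProd fun k _ => hasFDerivAt_Phi1_sub_apply t k x

lemma continuous_prodPhi1FDeriv (x : ι → ℝ) : Continuous (prodPhi1FDeriv x) := by
  unfold prodPhi1FDeriv; fun_prop

lemma prodPhi1FDeriv_apply_single (x : ι → ℝ) (t : ℝ) (j : ι) :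
    prodPhi1FDeriv x t (Pi.single j 1) =
      -(phi1 (t - x j) * ∏ l ∈ Finset.univ.erase j, Phi1 (t - x l)) := by
  simp [prodPhi1FDeriv, Pi.single_apply, mul_comm]

lemma norm_prodPhi1FDeriv_le (x : ι → ℝ) (t : ℝ) :
    ‖prodPhi1FDeriv x t‖ ≤ ∑ k, phi1 (t - x k) := by
  refine (norm_sum_le _ _).trans (Finset.sum_le_sum fun k _ => ?_)
  have hprod : ‖∏ l ∈ Finset.univ.erase k, Phi1 (t - x l)‖ ≤ 1 := by
    rw [Real.norm_of_nonneg (Finset.prod_nonneg fun l _ => Phi1_nonneg _)]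
    exact Finset.prod_le_one (fun l _ => Phi1_nonneg _) fun l _ => Phi1_le_one _
  have hproj : ‖(proj k : (ι → ℝ) →L[ℝ] ℝ)‖ ≤ 1 :=
    opNorm_le_bound _ zero_le_one fun y => by simpa using norm_le_pi_norm y k
  rw [norm_smul, norm_neg, norm_smul, Real.norm_of_nonneg (phi1_nonneg _)]
  have hphi := phi1_nonneg (t - x k)
  calc _ ≤ 1 * (phi1 (t - x k) * 1) :=
        mul_le_mul hprod (mul_le_mul_of_nonneg_left hproj hphi) (by positivity) zero_le_one
    _ = phi1 (t - x k) := by ring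

lemma norm_prodPhi1FDeriv_le_of_mem_ball {w x : ι → ℝ} (hx : x ∈ Metric.ball w 1) (t : ℝ) :
    ‖prodPhi1FDeriv x t‖ ≤ Real.exp t * ∑ k, Real.exp (3 / 2 - w k) := by
  rw [Finset.mul_sum]
  exact (norm_prodPhi1FDeriv_le x t).trans
    (Finset.sum_le_sum fun k _ => phi1_sub_le_of_mem_ball hx t k)

lemma integrableOn_prod_Phi1 (x : ι → ℝ) (j : ι) :
    IntegrableOn (fun t => ∏ k, Phi1 (t - x k)) (Iic 0) := by
  refine ((integrableOn_exp_Iic 0).mul_const (Real.exp (1 / 2 - x j))).mono'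
    (by fun_prop : Continuous fun t => ∏ k, Phi1 (t - x k)).aestronglyMeasurable
    (.of_forall fun t => ?_)
  rw [Real.norm_of_nonneg (Finset.prod_nonneg fun k _ => Phi1_nonneg _),
    ← Finset.mul_prod_erase _ _ (Finset.mem_univ j)]
  calc Phi1 (t - x j) * ∏ l ∈ Finset.univ.erase j, Phi1 (t - x l)
      ≤ Real.exp (1 / 2) * Real.exp (t - x j) * 1 :=
        mul_le_mul (Phi1_le_exp _) (Finset.prod_le_one (fun l _ => Phi1_nonneg _)
          fun l _ => Phi1_le_one _) (Finset.prod_nonneg fun l _ => Phi1_nonneg _) (by positivity)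
    _ = Real.exp t * Real.exp (1 / 2 - x j) := by
      rw [mul_one, ← Real.exp_add, ← Real.exp_add]; ring_nf

lemma integrableOn_prodPhi1FDeriv (x : ι → ℝ) : IntegrableOn (prodPhi1FDeriv x) (Iic 0) :=
  ((integrableOn_exp_Iic 0).mul_const _).mono' (continuous_prodPhi1FDeriv x).aestronglyMeasurable
    (.of_forall (norm_prodPhi1FDeriv_le_of_mem_ball (Metric.mem_ball_self one_pos)))

end Derivative

lemma hasFDerivAt_Psi {d : ℕ} [NeZero d] (w : Fin d → ℝ) :
    HasFDerivAt (Psi d) (∫ t in Iic 0, prodPhi1FDeriv w t) w :=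
  hasFDerivAt_integral_of_dominated_of_fderiv_le (Metric.ball_mem_nhds w one_pos)
    (.of_forall fun x =>
      (by fun_prop : Continuous fun t => ∏ k, Phi1 (t - x k)).aestronglyMeasurable)
    (integrableOn_prod_Phi1 w 0) (continuous_prodPhi1FDeriv w).aestronglyMeasurable
    (.of_forall fun t x hx => norm_prodPhi1FDeriv_le_of_mem_ball hx t)
    ((integrableOn_exp_Iic 0).mul_const _)
    (.of_forall fun t x _ => hasFDerivAt_prod_Phi1 t x)

lemma fderiv_Psi_apply_single {d : ℕ} (j : Fin d) (w : Fin d → ℝ) :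
    fderiv ℝ (Psi d) w (Pi.single j 1) =
      -∫ t in Iic 0, phi1 (t - w j) * ∏ l ∈ Finset.univ.erase j, Phi1 (t - w l) := by
  have : NeZero d := NeZero.of_pos j.pos
  rw [(hasFDerivAt_Psi w).fderiv,
    ContinuousLinearMap.integral_apply (integrableOn_prodPhi1FDeriv w), ← integral_neg]
  simp_rw [prodPhi1FDeriv_apply_single]

lemma integral_eq_integral_integral_insertNth {n : ℕ} {α : Fin (n + 1) → Type*}
    [∀ i, MeasureSpace (α i)] [∀ i, SigmaFinite (volume : Measure (α i))]
    {E : Type*} [NormedAddCommGroup E] [NormedSpace ℝ E] (i : Fin (n + 1))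
    {f : (∀ k, α k) → E} (hf : Integrable f) :
    ∫ s, f s = ∫ x, ∫ y, f (i.insertNth x y) := by
  have e := (volume_preserving_piFinSuccAbove α i).symm
  rw [← e.integral_comp']
  exact integral_prod _ (e.integrable_comp_emb (MeasurableEquiv.measurableEmbedding _) |>.2 hf)

lemma Fin.prod_univ_erase_eq_prod_succAbove {M : Type*} [CommMonoid M] {n : ℕ}
    (f : Fin (n + 1) → M) (j : Fin (n + 1)) :
    ∏ l ∈ Finset.univ.erase j, f l = ∏ i, f (j.succAbove i) := by
  rw [← Finset.compl_singleton, ← Fin.image_succAbove_univ,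
    Finset.prod_image fun _ _ _ _ h => Fin.succAbove_right_injective h]

lemma measurable_piSel (d : ℕ) (j : Fin d) : Measurable (piSel d j) := by
  refine Measurable.ite ?_ measurable_const measurable_const
  measurability

/-- The admissible values of `s (j.succAbove i)`, given `s j = x`, for `j` to be the first
maximum of `s`. -/
def piSelSlice {n : ℕ} (j : Fin (n + 1)) (i : Fin n) (x : ℝ) : Set ℝ :=
  if j.succAbove i < j then Iio x else Iic x

lemma piSel_condition_insertNth_iff {n : ℕ} (j : Fin (n + 1)) (x : ℝ) (y : Fin n → ℝ) :
    ((∀ k, j.insertNth (α := fun _ => ℝ) x y k ≤ j.insertNth (α := fun _ => ℝ) x y j) ∧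
      ∀ k, k < j → j.insertNth (α := fun _ => ℝ) x y k < j.insertNth (α := fun _ => ℝ) x y j) ↔
      ∀ i, y i ∈ piSelSlice j i x := by
  simp only [Fin.forall_iff_succAbove j, Fin.insertNth_apply_same, Fin.insertNth_apply_succAbove,
    le_refl, lt_irrefl, true_and, imp_self, ← forall_and]
  refine forall_congr' fun i => ?_
  unfold piSelSlice
  split_ifs with h
  · simpa [h] using le_of_lt
  · simp [h]

lemma indicator_piSel_mul_insertNth {n : ℕ} (j : Fin (n + 1)) (w : Fin (n + 1) → ℝ) (x : ℝ)
    (y : Fin n → ℝ) :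
    {s : Fin (n + 1) → ℝ | s j ≤ 0}.indicator (fun s => piSel (n + 1) j s * ∏ k, phi1 (s k - w k))
        (j.insertNth x y) =
      (Iic 0).indicator (fun x => phi1 (x - w j)) x *
        ∏ i, (piSelSlice j i x).indicator (fun u => phi1 (u - w (j.succAbove i))) (y i) := by
  classical
  simp only [Set.indicator_apply, piSel, piSel_condition_insertNth_iff]
  simp only [Fin.prod_univ_succAbove _ j, Fin.insertNth_apply_same, Fin.insertNth_apply_succAbove,
    Finset.prod_ite_zero, Finset.mem_univ, true_implies, mem_ofPred_eq, mem_Iic]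
  split_ifs <;> simp

lemma piSel_eq_zero_of_lt {d : ℕ} {j k : Fin d} {s : Fin d → ℝ} (h : s j < s k) :
    piSel d j s = 0 :=
  if_neg fun hmax => (hmax.1 k).not_gt h

lemma integrable_indicator_piSel_mul_gaussian {d : ℕ} (j : Fin d) (w : Fin d → ℝ) :
    Integrable ({s : Fin d → ℝ | s j ≤ 0}.indicator
      (fun s => piSel d j s * ∏ k, phi1 (s k - w k))) := by
  refine (Integrable.fintype_prod (f := fun k u => phi1 (u - w k))
      fun k => integrable_phi1.comp_sub_right (w k)).mono' ?_ (.of_forall fun s => ?_)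
  · refine (Measurable.indicator ?_ (measurableSet_le (measurable_pi_apply j) measurable_const))
      |>.aestronglyMeasurable
    exact (measurable_piSel d j).mul (by fun_prop)
  · have hP : 0 ≤ ∏ k, phi1 (s k - w k) := Finset.prod_nonneg fun k _ => phi1_nonneg _
    refine (norm_indicator_le_norm_self _ s).trans ?_
    unfold piSel
    split_ifs <;> simp [abs_of_nonneg (phi1_nonneg _), hP]

lemma integral_indicator_piSelSlice_phi1_sub {n : ℕ} (j : Fin (n + 1)) (i : Fin n) (x c : ℝ) :
    ∫ u, (piSelSlice j i x).indicator (fun u => phi1 (u - c)) u = Phi1 (x - c) := by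
  unfold piSelSlice
  split_ifs
  · rw [integral_indicator measurableSet_Iio, setIntegral_Iio_phi1_sub]
  · rw [integral_indicator measurableSet_Iic, setIntegral_Iic_phi1_sub]

lemma setIntegral_piSel_mul_gaussian {n : ℕ} (j : Fin (n + 1)) (w : Fin (n + 1) → ℝ) :
    ∫ s in {s : Fin (n + 1) → ℝ | ∀ k, s k ≤ 0}, piSel (n + 1) j s * ∏ k, phi1 (s k - w k) =
      ∫ t in Iic 0, phi1 (t - w j) * ∏ i, Phi1 (t - w (j.succAbove i)) := by
  have hj : MeasurableSet {s : Fin (n + 1) → ℝ | s j ≤ 0} :=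
    measurableSet_le (measurable_pi_apply j) measurable_const
  calc _ = ∫ s in {s : Fin (n + 1) → ℝ | s j ≤ 0}, piSel (n + 1) j s * ∏ k, phi1 (s k - w k) := by
        refine (setIntegral_eq_of_subset_of_forall_sdiff_eq_zero hj
          (fun s hs => (hs : ∀ k, s k ≤ 0) j) ?_).symm
        rintro s ⟨hsj, hs⟩
        obtain ⟨k, hk⟩ := not_forall.1 hs
        have hjk : s j < s k := (hsj : s j ≤ 0).trans_lt (not_le.1 hk)
        rw [piSel_eq_zero_of_lt hjk, zero_mul]
    _ = ∫ x, ∫ y : Fin n → ℝ, (Iic 0).indicator (fun x => phi1 (x - w j)) x *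
          ∏ i, (piSelSlice j i x).indicator (fun u => phi1 (u - w (j.succAbove i))) (y i) := by
        rw [← integral_indicator hj,
          integral_eq_integral_integral_insertNth j (integrable_indicator_piSel_mul_gaussian j w)]
        simp_rw [indicator_piSel_mul_insertNth]
    _ = ∫ x, (Iic 0).indicator (fun t => phi1 (t - w j) * ∏ i, Phi1 (t - w (j.succAbove i))) x := by
        congr 1; ext x
        rw [integral_const_mul, integral_fintype_prod_volume_eq_prod, Set.indicator_mul_left]
        simp_rw [integral_indicator_piSelSlice_phi1_sub]
    _ = _ := integral_indicator measurableSet_Iic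

/-- ∂_j Ψ(w) = −∫_{ℝ_−^d} π_j(s) φ(s − w) ds, where φ is the standard
Gaussian density on ℝ^d. -/
theorem stmt8 {d : ℕ} (j : Fin d) (w : Fin d → ℝ) :
    DifferentiableAt ℝ (Psi d) w ∧
    fderiv ℝ (Psi d) w (Pi.single j 1)
      = - ∫ s in {s : Fin d → ℝ | ∀ k, s k ≤ 0},
          piSel d j s * ∏ k, phi1 (s k - w k) := by
  have : NeZero d := NeZero.of_pos j.pos
  refine ⟨(hasFDerivAt_Psi w).differentiableAt, ?_⟩
  obtain ⟨n, rfl⟩ := Nat.exists_eq_succ_of_ne_zero (NeZero.ne d)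
  rw [fderiv_Psi_apply_single, setIntegral_piSel_mul_gaussian]
  simp_rw [Fin.prod_univ_erase_eq_prod_succAbove]
end

section
/- Let X_1,…,X_n be independent random vectors in ℝ^d (d ≥ 2) with nonnegative coordinates. Set Z := max_{1≤j≤d} Σ_{i=1}^n X_{ij} and M := max_{i,j} X_{ij}. Then E[Z] ≤ C (max_j E[Σ_i X_{ij}] + E[M] log d) for a universal constant C. -/
/-!
Truncate at `τ = 2 E[M]` and write `ηᵢ = maxⱼ X_ij`, so that `X_ij ≤ min(X_ij, τ) + (ηᵢ - τ)⁺`.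

The truncated summands are independent with values in `[0, τ]`; convexity of `exp` on `[0, 1]`
bounds the moment generating function of `Σᵢ min(X_ij, τ) / τ` by `exp ((e - 1) E[Σᵢ X_ij] / τ)`,
and the log-sum-exp bound on the maximum gives `τ log d + (e - 1) maxⱼ E[Σᵢ X_ij]`.

For the excesses, Markov's inequality shows that all `ηᵢ ≤ τ` with probability at least `1/2`.
The event that every `ηₖ` with `k ≠ i` stays below `τ` is independent of `ηᵢ`, and on it
`(ηᵢ - τ)⁺` is the only nonzero excess; summing over `i` gives `Σᵢ E(ηᵢ - τ)⁺ ≤ 2 E[M]`.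
-/

open MeasureTheory ProbabilityTheory Real Finset

lemma exp_le_one_add_exp_one_sub_one_mul {s : ℝ} (h0 : 0 ≤ s) (h1 : s ≤ 1) :
    exp s ≤ 1 + (exp 1 - 1) * s := by
  have h := convexOn_exp.2 (Set.mem_univ 0) (Set.mem_univ 1) (sub_nonneg.2 h1) h0 (by ring)
  simp only [smul_eq_mul, mul_zero, mul_one, zero_add, exp_zero] at h
  linarith

lemma le_min_add_max_sub_zero {x y : ℝ} (hxy : x ≤ y) (τ : ℝ) :
    x ≤ min x τ + max (y - τ) 0 := by
  rcases le_total x τ with h | h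
  · simp [min_eq_left h]
  · rw [min_eq_right h]; linarith [le_max_left (y - τ) 0]

/-- The tangent line `log y ≤ y / c - 1 + log c` of `log` at `c`: integrated, it replaces
Jensen's inequality for `log`. -/
lemma iSup_le_sum_exp_div_sub_one_add_log {κ : Type*} [Fintype κ] [Nonempty κ] (t : κ → ℝ)
    {c : ℝ} (hc : 0 < c) :
    ⨆ j, t j ≤ (∑ j, exp (t j)) / c - 1 + log c := by
  refine ciSup_le fun j => ?_
  have hsum : 0 < ∑ k, exp (t k) := sum_pos (fun k _ => exp_pos _) univ_nonempty
  calc t j = log (exp (t j)) := (log_exp _).symm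
    _ ≤ log (∑ k, exp (t k)) :=
      log_le_log (exp_pos _) (single_le_sum (fun k _ => (exp_pos (t k)).le) (mem_univ j))
    _ = log ((∑ k, exp (t k)) / c) + log c := by
      rw [log_div hsum.ne' hc.ne', sub_add_cancel]
    _ ≤ (∑ k, exp (t k)) / c - 1 + log c := by
      gcongr; exact log_le_sub_one_of_pos (div_pos hsum hc)

lemma sum_ite_forall_ne_le_le_iSup {ι : Type*} [Fintype ι] [DecidableEq ι] (x : ι → ℝ) (τ : ℝ) :
    ∑ i, (if ∀ k ≠ i, x k ≤ τ then max (x i - τ) 0 else 0) ≤ ⨆ i, max (x i - τ) 0 := by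
  by_cases hbig : ∃ i, τ < x i
  · obtain ⟨i, hi⟩ := hbig
    rw [sum_eq_single i]
    · refine le_trans ?_ (le_ciSup (f := fun i => max (x i - τ) 0) (Finite.bddAbove_range _) i)
      split_ifs <;> simp
    · intro k _ hki
      rw [if_neg (fun h => (h i hki.symm).not_gt hi)]
    · simp
  · push Not at hbig
    refine (sum_nonpos fun i _ => ?_).trans (Real.iSup_nonneg fun _ => le_max_right _ _)
    split_ifs <;> simp [hbig i]

namespace ProbabilityTheory

variable {Ω ι : Type*} [MeasurableSpace Ω] {μ : Measure Ω} [Fintype ι]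

lemma iIndepFun.indepFun_max_sub_indicator_forall_ne_le [DecidableEq ι] {η : ι → Ω → ℝ}
    (hη : iIndepFun η μ) (hmeas : ∀ i, Measurable (η i)) (τ : ℝ) (i : ι) :
    IndepFun (fun ω => max (η i ω - τ) 0)
      ({ω | ∀ k ≠ i, η k ω ≤ τ}.indicator (1 : Ω → ℝ)) μ := by
  have h := (hη.indepFun_finset {i} (univ.erase i) (by simp) hmeas).comp
    (φ := fun y : ↥({i} : Finset ι) → ℝ => max (y ⟨i, mem_singleton_self i⟩ - τ) 0)
    (ψ := {y : ↥(univ.erase i) → ℝ | ∀ k, y k ≤ τ}.indicator (1 : (↥(univ.erase i) → ℝ) → ℝ))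
    (by fun_prop)
    (measurable_one.indicator (by
      simp only [Set.ofPred_forall]
      exact MeasurableSet.iInter fun k =>
        measurableSet_le (measurable_pi_apply k) measurable_const))
  convert h using 1
  · rfl
  ext ω
  simp [Set.indicator_apply]

lemma iIndepFun.measureReal_forall_le_mul_sum_integral_max_sub_le [IsProbabilityMeasure μ]
    {η : ι → Ω → ℝ} (hη : iIndepFun η μ) (hmeas : ∀ i, Measurable (η i))
    (hint : ∀ i, Integrable (η i) μ) (τ : ℝ) :
    μ.real {ω | ∀ i, η i ω ≤ τ} * ∑ i, ∫ ω, max (η i ω - τ) 0 ∂μ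
      ≤ ∫ ω, ⨆ i, max (η i ω - τ) 0 ∂μ := by
  classical
  set A : ι → Set Ω := fun i => {ω | ∀ k ≠ i, η k ω ≤ τ}
  have hA : ∀ i, MeasurableSet (A i) := fun i => by
    simp only [A, Set.ofPred_forall]
    exact MeasurableSet.iInter fun k => MeasurableSet.iInter fun _ =>
      measurableSet_le (hmeas k) measurable_const
  have hφint : ∀ i, Integrable (fun ω => max (η i ω - τ) 0) μ := fun i =>
    ((hint i).sub (integrable_const τ)).pos_part
  have hsup_int : Integrable (fun ω => ⨆ i, max (η i ω - τ) 0) μ := by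
    refine Integrable.mono' (integrable_finsetSum univ fun i _ => hφint i)
      (Measurable.iSup fun i => ((hmeas i).sub_const τ).max measurable_const).aestronglyMeasurable
      (ae_of_all _ fun ω => ?_)
    rw [Real.norm_eq_abs, abs_of_nonneg (Real.iSup_nonneg fun i => le_max_right _ _)]
    exact Real.iSup_le (fun i => single_le_sum (f := fun i => max (η i ω - τ) 0)
      (fun i _ => le_max_right _ _) (mem_univ i)) (sum_nonneg fun i _ => le_max_right _ _)
  calc μ.real {ω | ∀ i, η i ω ≤ τ} * ∑ i, ∫ ω, max (η i ω - τ) 0 ∂μ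
      ≤ ∑ i, (∫ ω, max (η i ω - τ) 0 ∂μ) * μ.real (A i) := by
        rw [mul_sum]
        refine sum_le_sum fun i _ => ?_
        rw [mul_comm]
        exact mul_le_mul_of_nonneg_left (measureReal_mono fun ω hω k _ => hω k)
          (integral_nonneg fun ω => le_max_right _ _)
    _ = ∑ i, ∫ ω, (A i).indicator (fun ω => max (η i ω - τ) 0) ω ∂μ := by
        refine sum_congr rfl fun i _ => ?_
        rw [← integral_indicator_one (hA i), ← IndepFun.integral_mul_eq_mul_integral
          (hη.indepFun_max_sub_indicator_forall_ne_le hmeas τ i)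
          (hφint i).aestronglyMeasurable (measurable_one.indicator (hA i)).aestronglyMeasurable]
        simp [A, Set.indicator_apply]
    _ = ∫ ω, ∑ i, (A i).indicator (fun ω => max (η i ω - τ) 0) ω ∂μ :=
        (integral_finsetSum _ fun i _ => (hφint i).indicator (hA i)).symm
    _ ≤ ∫ ω, ⨆ i, max (η i ω - τ) 0 ∂μ :=
        integral_mono (integrable_finsetSum _ fun i _ => (hφint i).indicator (hA i)) hsup_int
          fun ω => by simpa [A, Set.indicator_apply] using
            sum_ite_forall_ne_le_le_iSup (fun i => η i ω) τ

lemma one_sub_integral_div_le_measureReal_le [IsProbabilityMeasure μ] {f : Ω → ℝ}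
    (hmeas : Measurable f) (h0 : ∀ ω, 0 ≤ f ω) (hint : Integrable f μ) {τ : ℝ} (hτ : 0 < τ) :
    1 - (∫ ω, f ω ∂μ) / τ ≤ μ.real {ω | f ω ≤ τ} := by
  have hmarkov : τ * μ.real {ω | τ ≤ f ω} ≤ ∫ ω, f ω ∂μ :=
    mul_meas_ge_le_integral_of_nonneg (ae_of_all _ h0) hint τ
  have hcompl : μ.real {ω | f ω < τ} = 1 - μ.real {ω | τ ≤ f ω} := by
    rw [← probReal_compl_eq_one_sub (measurableSet_le measurable_const hmeas)]
    congr 1 with ω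
    simp
  calc 1 - (∫ ω, f ω ∂μ) / τ ≤ 1 - μ.real {ω | τ ≤ f ω} := by
        have : μ.real {ω | τ ≤ f ω} ≤ (∫ ω, f ω ∂μ) / τ := by
          rw [le_div_iff₀ hτ, mul_comm]; exact hmarkov
        linarith
    _ = μ.real {ω | f ω < τ} := hcompl.symm
    _ ≤ μ.real {ω | f ω ≤ τ} := measureReal_mono fun ω (hω : f ω < τ) => hω.le

lemma iIndepFun.sum_integral_max_sub_le_two_mul_integral_iSup [IsProbabilityMeasure μ]
    {η : ι → Ω → ℝ} (hη : iIndepFun η μ) (hmeas : ∀ i, Measurable (η i)) (h0 : ∀ i ω, 0 ≤ η i ω)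
    (hint : ∀ i, Integrable (η i) μ) (hsup : Integrable (fun ω => ⨆ i, η i ω) μ)
    {τ : ℝ} (hτ : 0 < τ) (hτsup : 2 * ∫ ω, ⨆ i, η i ω ∂μ ≤ τ) :
    ∑ i, ∫ ω, max (η i ω - τ) 0 ∂μ ≤ 2 * ∫ ω, ⨆ i, η i ω ∂μ := by
  have hle_sup : ∀ i ω, η i ω ≤ ⨆ i, η i ω := fun i ω =>
    le_ciSup (f := fun i => η i ω) (Finite.bddAbove_range _) i
  have hsup0 : ∀ ω, 0 ≤ ⨆ i, η i ω := fun ω => Real.iSup_nonneg fun i => h0 i ω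
  have hhalf : 1 / 2 ≤ μ.real {ω | ∀ i, η i ω ≤ τ} := by
    calc (1 : ℝ) / 2 ≤ 1 - (∫ ω, ⨆ i, η i ω ∂μ) / τ := by
          have : (∫ ω, ⨆ i, η i ω ∂μ) / τ ≤ 1 / 2 := by
            rw [div_le_iff₀ hτ]; linarith
          linarith
      _ ≤ μ.real {ω | ⨆ i, η i ω ≤ τ} :=
          one_sub_integral_div_le_measureReal_le (Measurable.iSup hmeas) hsup0 hsup hτ
      _ ≤ μ.real {ω | ∀ i, η i ω ≤ τ} := measureReal_mono fun ω hω i => (hle_sup i ω).trans hω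
  have hsup_max_sub : ∫ ω, ⨆ i, max (η i ω - τ) 0 ∂μ ≤ ∫ ω, ⨆ i, η i ω ∂μ :=
    integral_mono_of_nonneg (ae_of_all _ fun ω => Real.iSup_nonneg fun i => le_max_right _ _) hsup
      (ae_of_all _ fun ω => Real.iSup_le
        (fun i => max_le (by linarith [hle_sup i ω]) (hsup0 ω)) (hsup0 ω))
  have hsum0 : 0 ≤ ∑ i, ∫ ω, max (η i ω - τ) 0 ∂μ :=
    sum_nonneg fun i _ => integral_nonneg fun ω => le_max_right _ _
  nlinarith [hη.measureReal_forall_le_mul_sum_integral_max_sub_le hmeas hint τ]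

lemma mgf_one_le_exp_mul_integral [IsProbabilityMeasure μ] {U : Ω → ℝ} (hmeas : Measurable U)
    (h0 : ∀ ω, 0 ≤ U ω) (h1 : ∀ ω, U ω ≤ 1) :
    mgf U μ 1 ≤ exp ((exp 1 - 1) * ∫ ω, U ω ∂μ) := by
  have hUint : Integrable U μ :=
    Integrable.of_bound hmeas.aestronglyMeasurable 1
      (ae_of_all _ fun ω => by rw [Real.norm_eq_abs, abs_of_nonneg (h0 ω)]; exact h1 ω)
  have hexp_int : Integrable (fun ω => exp (1 * U ω)) μ :=
    Integrable.of_bound (by fun_prop) (exp 1) (ae_of_all _ fun ω => by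
      rw [Real.norm_eq_abs, abs_of_pos (exp_pos _), one_mul]; exact exp_le_exp.2 (h1 ω))
  calc mgf U μ 1 ≤ ∫ ω, (1 + (exp 1 - 1) * U ω) ∂μ :=
        integral_mono hexp_int ((integrable_const 1).add (hUint.const_mul _)) fun ω => by
          simpa using exp_le_one_add_exp_one_sub_one_mul (h0 ω) (h1 ω)
    _ = (exp 1 - 1) * (∫ ω, U ω ∂μ) + 1 := by
        rw [integral_add (integrable_const 1) (hUint.const_mul _), integral_const_mul]
        simp [add_comm]
    _ ≤ exp ((exp 1 - 1) * ∫ ω, U ω ∂μ) := add_one_le_exp _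

lemma iIndepFun.integral_exp_sum_le [IsProbabilityMeasure μ] {U : ι → Ω → ℝ}
    (hU : iIndepFun U μ) (hmeas : ∀ i, Measurable (U i)) (h0 : ∀ i ω, 0 ≤ U i ω)
    (h1 : ∀ i ω, U i ω ≤ 1) :
    ∫ ω, exp (∑ i, U i ω) ∂μ ≤ exp ((exp 1 - 1) * ∑ i, ∫ ω, U i ω ∂μ) := by
  calc ∫ ω, exp (∑ i, U i ω) ∂μ = mgf (∑ i, U i) μ 1 := by simp [mgf, Finset.sum_apply]
    _ = ∏ i, mgf (U i) μ 1 := hU.mgf_sum hmeas univ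
    _ ≤ ∏ i, exp ((exp 1 - 1) * ∫ ω, U i ω ∂μ) :=
        prod_le_prod (fun i _ => mgf_nonneg) fun i _ =>
          mgf_one_le_exp_mul_integral (hmeas i) (h0 i) (h1 i)
    _ = exp ((exp 1 - 1) * ∑ i, ∫ ω, U i ω ∂μ) := by rw [← exp_sum, mul_sum]

lemma integral_iSup_le_log_card_add [IsProbabilityMeasure μ] {κ : Type*} [Fintype κ] [Nonempty κ]
    {T : κ → Ω → ℝ} (hexp : ∀ j, Integrable (fun ω => exp (T j ω)) μ)
    (hsup : Integrable (fun ω => ⨆ j, T j ω) μ) {b : ℝ}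
    (hb : ∀ j, ∫ ω, exp (T j ω) ∂μ ≤ exp b) :
    ∫ ω, ⨆ j, T j ω ∂μ ≤ log (Fintype.card κ) + b := by
  set c : ℝ := Fintype.card κ * exp b
  have hc : 0 < c := by positivity
  have hsum_int : Integrable (fun ω => ∑ j, exp (T j ω)) μ :=
    integrable_finsetSum _ fun j _ => hexp j
  calc ∫ ω, ⨆ j, T j ω ∂μ ≤ ∫ ω, ((∑ j, exp (T j ω)) / c - 1 + log c) ∂μ :=
        integral_mono hsup (((hsum_int.div_const c).sub (integrable_const 1)).add
          (integrable_const _)) fun ω => iSup_le_sum_exp_div_sub_one_add_log (fun j => T j ω) hc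
    _ = (∑ j, ∫ ω, exp (T j ω) ∂μ) / c - 1 + log c := by
        rw [integral_add (f := fun ω => (∑ j, exp (T j ω)) / c - 1)
          ((hsum_int.div_const c).sub (integrable_const 1)) (integrable_const _),
          integral_sub (hsum_int.div_const c) (integrable_const 1), integral_div,
          integral_finsetSum _ fun j _ => hexp j]
        simp
    _ ≤ c / c - 1 + log c := by
        gcongr
        calc ∑ j, ∫ ω, exp (T j ω) ∂μ ≤ ∑ _j : κ, exp b := sum_le_sum fun j _ => hb j
          _ = c := by simp [c]
    _ = log (Fintype.card κ) + b := by
        rw [div_self hc.ne', sub_self, zero_add, log_mul (by positivity) (exp_pos b).ne', log_exp]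

section Vectors

variable {κ : Type*} [Fintype κ] {X : ι → Ω → κ → ℝ}

lemma integrable_iSup_sum_min_div [IsFiniteMeasure μ] (hmeas : ∀ i, Measurable (X i))
    (h0 : ∀ i ω j, 0 ≤ X i ω j) {τ : ℝ} (hτ : 0 < τ) :
    Integrable (fun ω => ⨆ j, ∑ i, min (X i ω j) τ / τ) μ := by
  refine Integrable.of_bound (Measurable.iSup fun j => by fun_prop).aestronglyMeasurable
    (Fintype.card ι) (ae_of_all _ fun ω => ?_)
  have hterm : ∀ i j, min (X i ω j) τ / τ ∈ Set.Icc 0 1 := fun i j =>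
    ⟨div_nonneg (le_min (h0 i ω j) hτ.le) hτ.le, (div_le_one hτ).2 (min_le_right _ _)⟩
  rw [Real.norm_eq_abs,
    abs_of_nonneg (Real.iSup_nonneg fun j => sum_nonneg fun i _ => (hterm i j).1)]
  exact Real.iSup_le (fun j => (sum_le_sum fun i _ => (hterm i j).2).trans (by simp))
    (Nat.cast_nonneg _)

lemma iIndepFun.integral_iSup_sum_min_div_le [IsProbabilityMeasure μ] [Nonempty κ]
    (hX : iIndepFun X μ) (hmeas : ∀ i, Measurable (X i)) (h0 : ∀ i ω j, 0 ≤ X i ω j)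
    (hint : ∀ i j, Integrable (fun ω => X i ω j) μ) {τ : ℝ} (hτ : 0 < τ) :
    ∫ ω, ⨆ j, ∑ i, min (X i ω j) τ / τ ∂μ
      ≤ log (Fintype.card κ) + (exp 1 - 1) * (⨆ j, ∑ i, ∫ ω, X i ω j ∂μ) / τ := by
  have hUmeas : ∀ i j, Measurable fun ω => min (X i ω j) τ / τ := fun i j => by fun_prop
  have hU0 : ∀ i j ω, 0 ≤ min (X i ω j) τ / τ := fun i j ω =>
    div_nonneg (le_min (h0 i ω j) hτ.le) hτ.le
  have hU1 : ∀ i j ω, min (X i ω j) τ / τ ≤ 1 := fun i j ω => (div_le_one hτ).2 (min_le_right _ _)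
  refine integral_iSup_le_log_card_add (fun j => ?_) (integrable_iSup_sum_min_div hmeas h0 hτ)
    fun j => ?_
  · refine Integrable.of_bound (by fun_prop) (exp (Fintype.card ι)) (ae_of_all _ fun ω => ?_)
    rw [Real.norm_eq_abs, abs_of_pos (exp_pos _)]
    exact exp_le_exp.2 ((sum_le_sum fun i _ => hU1 i j ω).trans (by simp))
  have hUj : iIndepFun (fun i ω => min (X i ω j) τ / τ) μ :=
    hX.comp (fun _ x => min (x j) τ / τ) fun _ => by fun_prop
  refine (hUj.integral_exp_sum_le (fun i => hUmeas i j) (fun i => hU0 i j)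
    fun i => hU1 i j).trans ?_
  rw [exp_le_exp, mul_div_assoc]
  refine mul_le_mul_of_nonneg_left ?_ (by linarith [add_one_le_exp (1 : ℝ)])
  calc ∑ i, ∫ ω, min (X i ω j) τ / τ ∂μ ≤ ∑ i, (∫ ω, X i ω j ∂μ) / τ := by
        refine sum_le_sum fun i _ => ?_
        rw [← integral_div]
        have hUint : Integrable (fun ω => min (X i ω j) τ / τ) μ :=
          Integrable.of_bound (hUmeas i j).aestronglyMeasurable 1 (ae_of_all _ fun ω => by
            rw [Real.norm_eq_abs, abs_of_nonneg (hU0 i j ω)]; exact hU1 i j ω)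
        exact integral_mono hUint ((hint i j).div_const τ) fun ω => by
          gcongr; exact min_le_left _ _
    _ = (∑ i, ∫ ω, X i ω j ∂μ) / τ := (sum_div _ _ _).symm
    _ ≤ (⨆ j, ∑ i, ∫ ω, X i ω j ∂μ) / τ := by
        gcongr
        exact le_ciSup (f := fun j => ∑ i, ∫ ω, X i ω j ∂μ) (Finite.bddAbove_range _) j

lemma iIndepFun.integral_iSup_sum_le [IsProbabilityMeasure μ] [Nonempty κ]
    (hX : iIndepFun X μ) (hmeas : ∀ i, Measurable (X i)) (h0 : ∀ i ω j, 0 ≤ X i ω j)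
    (hint : ∀ i j, Integrable (fun ω => X i ω j) μ)
    (hMint : Integrable (fun ω => ⨆ i, ⨆ j, X i ω j) μ)
    (hZint : Integrable (fun ω => ⨆ j, ∑ i, X i ω j) μ) {τ : ℝ} (hτ : 0 < τ)
    (hτM : 2 * ∫ ω, ⨆ i, ⨆ j, X i ω j ∂μ ≤ τ) :
    ∫ ω, ⨆ j, ∑ i, X i ω j ∂μ
      ≤ τ * log (Fintype.card κ) + (exp 1 - 1) * (⨆ j, ∑ i, ∫ ω, X i ω j ∂μ)
        + 2 * ∫ ω, ⨆ i, ⨆ j, X i ω j ∂μ := by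
  set η : ι → Ω → ℝ := fun i ω => ⨆ j, X i ω j
  have hηmeas : ∀ i, Measurable (η i) := fun i => Measurable.iSup fun j => by fun_prop
  have hη : iIndepFun η μ := hX.comp (fun _ x => ⨆ j, x j) fun _ => by fun_prop
  have hXη : ∀ i ω j, X i ω j ≤ η i ω := fun i ω j =>
    le_ciSup (f := fun j => X i ω j) (Finite.bddAbove_range _) j
  have hη0 : ∀ i ω, 0 ≤ η i ω := fun i ω => Real.iSup_nonneg fun j => h0 i ω j
  have hηint : ∀ i, Integrable (η i) μ := fun i =>
    hMint.mono' (hηmeas i).aestronglyMeasurable (ae_of_all _ fun ω => by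
      rw [Real.norm_eq_abs, abs_of_nonneg (hη0 i ω)]
      exact le_ciSup (f := fun i => η i ω) (Finite.bddAbove_range _) i)
  have hφint : ∀ i, Integrable (fun ω => max (η i ω - τ) 0) μ := fun i =>
    ((hηint i).sub (integrable_const τ)).pos_part
  have hφsum_int : Integrable (fun ω => ∑ i, max (η i ω - τ) 0) μ :=
    integrable_finsetSum _ fun i _ => hφint i
  have htrunc_int := integrable_iSup_sum_min_div (μ := μ) hmeas h0 hτ
  have hpointwise : ∀ ω, ⨆ j, ∑ i, X i ω j
      ≤ τ * (⨆ j, ∑ i, min (X i ω j) τ / τ) + ∑ i, max (η i ω - τ) 0 := fun ω =>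
    ciSup_le fun j => calc
      ∑ i, X i ω j ≤ ∑ i, (τ * (min (X i ω j) τ / τ) + max (η i ω - τ) 0) :=
          sum_le_sum fun i _ => by
            rw [mul_div_cancel₀ _ hτ.ne']; exact le_min_add_max_sub_zero (hXη i ω j) τ
      _ = τ * ∑ i, min (X i ω j) τ / τ + ∑ i, max (η i ω - τ) 0 := by
          rw [sum_add_distrib, mul_sum]
      _ ≤ τ * (⨆ j, ∑ i, min (X i ω j) τ / τ) + ∑ i, max (η i ω - τ) 0 := by
          gcongr
          exact le_ciSup (f := fun j => ∑ i, min (X i ω j) τ / τ) (Finite.bddAbove_range _) j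
  calc ∫ ω, ⨆ j, ∑ i, X i ω j ∂μ
      ≤ ∫ ω, (τ * (⨆ j, ∑ i, min (X i ω j) τ / τ) + ∑ i, max (η i ω - τ) 0) ∂μ :=
        integral_mono hZint ((htrunc_int.const_mul τ).add hφsum_int) hpointwise
    _ = τ * ∫ ω, ⨆ j, ∑ i, min (X i ω j) τ / τ ∂μ + ∑ i, ∫ ω, max (η i ω - τ) 0 ∂μ := by
        rw [integral_add (htrunc_int.const_mul τ) hφsum_int, integral_const_mul,
          integral_finsetSum _ fun i _ => hφint i]
    _ ≤ τ * (log (Fintype.card κ) + (exp 1 - 1) * (⨆ j, ∑ i, ∫ ω, X i ω j ∂μ) / τ)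
          + 2 * ∫ ω, ⨆ i, ⨆ j, X i ω j ∂μ := by
        gcongr
        · exact hX.integral_iSup_sum_min_div_le hmeas h0 hint hτ
        · exact hη.sum_integral_max_sub_le_two_mul_integral_iSup hηmeas hη0 hηint hMint hτ hτM
    _ = τ * log (Fintype.card κ) + (exp 1 - 1) * (⨆ j, ∑ i, ∫ ω, X i ω j ∂μ)
          + 2 * ∫ ω, ⨆ i, ⨆ j, X i ω j ∂μ := by
        field_simp

lemma integral_iSup_sum_le_card_mul [Nonempty κ]
    (hMint : Integrable (fun ω => ⨆ i, ⨆ j, X i ω j) μ)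
    (hZint : Integrable (fun ω => ⨆ j, ∑ i, X i ω j) μ) :
    ∫ ω, ⨆ j, ∑ i, X i ω j ∂μ ≤ Fintype.card ι * ∫ ω, ⨆ i, ⨆ j, X i ω j ∂μ := by
  rw [← integral_const_mul]
  refine integral_mono hZint (hMint.const_mul _) fun ω => ciSup_le fun j => ?_
  calc ∑ i, X i ω j ≤ ∑ _i : ι, ⨆ i, ⨆ j, X i ω j := sum_le_sum fun i _ =>
        (le_ciSup (f := fun j => X i ω j) (Finite.bddAbove_range _) j).trans
          (le_ciSup (f := fun i => ⨆ j, X i ω j) (Finite.bddAbove_range _) i)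
    _ = Fintype.card ι * ⨆ i, ⨆ j, X i ω j := by simp

end Vectors

end ProbabilityTheory

/-- Maximal inequality for nonnegative summands.  There is a universal
constant C such that for independent random vectors X_1,…,X_n in ℝ^d (d ≥ 2) with
nonnegative coordinates, with Z = max_j Σ_i X_{ij} and M = max_{i,j} X_{ij},
E[Z] ≤ C(max_j E[Σ_i X_{ij}] + E[M] log d). -/
theorem stmt13 :
    ∃ C : ℝ, 0 < C ∧
      ∀ (n d : ℕ), 2 ≤ d →
      ∀ (Ω : Type) (_ : MeasurableSpace Ω) (μ : Measure Ω), IsProbabilityMeasure μ →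
      ∀ (X : Fin n → Ω → Fin d → ℝ), (∀ i, Measurable (X i)) →
      iIndepFun X μ →
      (∀ i ω j, 0 ≤ X i ω j) →
      (∀ i j, Integrable (fun ω => X i ω j) μ) →
      Integrable (fun ω => ⨆ i, ⨆ j, X i ω j) μ →
      Integrable (fun ω => ⨆ j, ∑ i, X i ω j) μ →
        ∫ ω, (⨆ j, ∑ i, X i ω j) ∂μ
          ≤ C * ((⨆ j, ∑ i, ∫ ω, X i ω j ∂μ)
              + (∫ ω, (⨆ i, ⨆ j, X i ω j) ∂μ) * Real.log d) := by
  refine ⟨5, by norm_num, fun n d hd Ω _ μ _ X hmeas hX h0 hint hMint hZint => ?_⟩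
  have : Nonempty (Fin d) := ⟨⟨0, by omega⟩⟩
  have hM0 : 0 ≤ ∫ ω, ⨆ i, ⨆ j, X i ω j ∂μ :=
    integral_nonneg fun ω => Real.iSup_nonneg fun i => Real.iSup_nonneg fun j => h0 i ω j
  have hmean0 : 0 ≤ ⨆ j, ∑ i, ∫ ω, X i ω j ∂μ :=
    Real.iSup_nonneg fun j => sum_nonneg fun i _ => integral_nonneg fun ω => h0 i ω j
  have hlog : 2 / 3 < log d :=
    (show (2 : ℝ) / 3 < log 2 by linarith [log_two_gt_d9]).trans_le
      (log_le_log (by norm_num) (by exact_mod_cast hd))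
  rcases hM0.eq_or_lt with hM | hM
  · have h := integral_iSup_sum_le_card_mul hMint hZint
    rw [← hM, mul_zero] at h
    rw [← hM, zero_mul, add_zero]
    nlinarith
  · have h := hX.integral_iSup_sum_le hmeas h0 hint hMint hZint (by positivity) le_rfl
    rw [Fintype.card_fin] at h
    nlinarith [exp_one_lt_d9]
end
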